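/- arXiv:2308.05082 — 5 statements merged into one kernel-verified Lean document; each statement's English description precedes it below -/
import Mathlib

section
/- Let f: O → ℝ^d be twice continuously differentiable on a convex open neighbourhood O of a root u* (f(u*)=0), with Df Lipschitz on O with constant θ, the map u ↦ (Df(u))⁻¹ Lipschitz on O with constant θ̄ (in an operator norm induced by a norm on ℝ^d), and set ρ* = ‖(Df(u*))⁻¹‖. If u⁽⁰⁾ ∈ O satisfies ‖u⁽⁰⁾ − u*‖ ≤ min(ρ*/θ̄, 1/(2θρ*)), then the Newton iterates u⁽ⁿ⁺¹⁾ = u⁽ⁿ⁾ − (Df(u⁽ⁿ⁾))⁻¹ f(u⁽ⁿ⁾) remain in the ball, converge to u*, and satisfy the quadratic estimate ‖u⁽ⁿ⁺¹⁾ − u*‖ ≤ ρ* θ ‖u⁽ⁿ⁾ − u*‖². -/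
/-!
Write `e = u - u*`. Since `f u* = 0`, the Newton error is `(Df u)⁻¹ (f u* - f u - Df u (u* - u))`,
and a Lipschitz derivative bounds that Taylor remainder by `θ/2 ‖e‖²`. On the ball, the Lipschitz
bound for `u ↦ (Df u)⁻¹` together with `‖e‖ ≤ ρ*/θ̄` gives `‖(Df u)⁻¹‖ ≤ 2ρ*`, hence the quadratic
estimate; and `‖e‖ ≤ 1/(2θρ*)` turns it into a contraction by `1/2`, which keeps the iterates in
the ball and makes them converge geometrically.
-/

open Filter Topology Set

section

variable {E F : Type*} [NormedAddCommGroup E] [NormedSpace ℝ E]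
  [NormedAddCommGroup F] [NormedSpace ℝ F]

theorem Convex.norm_image_sub_sub_fderiv_le_of_lipschitz {s : Set E} (hs : Convex ℝ s)
    {f : E → F} {Df : E → E →L[ℝ] F} (hf : ∀ u ∈ s, HasFDerivAt f (Df u) u)
    {x y : E} (hx : x ∈ s) (hy : y ∈ s) {θ : ℝ}
    (hLip : ∀ u ∈ s, ‖Df u - Df x‖ ≤ θ * ‖u - x‖) :
    ‖f y - f x - Df x (y - x)‖ ≤ θ / 2 * ‖y - x‖ ^ 2 := by
  set v := y - x
  have hmem : ∀ t ∈ Icc (0 : ℝ) 1, x + t • v ∈ s := fun t ht => hs.add_smul_sub_mem hx hy ht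
  -- `R 0 = 0` and `‖R' t‖ ≤ θ ‖v‖² t`, so comparing `R` with `θ ‖v‖² t² / 2` bounds `‖R 1‖`.
  set R : ℝ → F := fun t => f (x + t • v) - t • Df x v - f x
  have hR : ∀ t ∈ Icc (0 : ℝ) 1, HasDerivAt R (Df (x + t • v) v - Df x v) t := by
    intro t ht
    have hline : HasDerivAt (fun t : ℝ => x + t • v) v t := by
      simpa using ((hasDerivAt_id t).smul_const v).const_add x
    have hlin : HasDerivAt (fun t : ℝ => t • Df x v) (Df x v) t := by
      simpa using (hasDerivAt_id t).smul_const (Df x v)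
    exact (((hf _ (hmem t ht)).comp_hasDerivAt t hline).sub hlin).sub_const (f x)
  have hR' : ∀ t ∈ Ico (0 : ℝ) 1, ‖Df (x + t • v) v - Df x v‖ ≤ θ * ‖v‖ ^ 2 * t := by
    intro t ht
    calc ‖Df (x + t • v) v - Df x v‖ = ‖(Df (x + t • v) - Df x) v‖ := rfl
      _ ≤ ‖Df (x + t • v) - Df x‖ * ‖v‖ := ContinuousLinearMap.le_opNorm _ v
      _ ≤ θ * ‖t • v‖ * ‖v‖ := by
          gcongr
          simpa using hLip _ (hmem t ⟨ht.1, ht.2.le⟩)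
      _ = θ * ‖v‖ ^ 2 * t := by rw [norm_smul, Real.norm_of_nonneg ht.1]; ring
  have hB : ∀ t : ℝ, HasDerivAt (fun t => θ * ‖v‖ ^ 2 * (t ^ 2 / 2)) (θ * ‖v‖ ^ 2 * t) t := by
    intro t
    refine (((hasDerivAt_pow 2 t).div_const 2).const_mul (θ * ‖v‖ ^ 2)).congr_deriv ?_
    push_cast
    ring
  have key := image_norm_le_of_norm_deriv_right_le_deriv_boundary
    (fun t ht => (hR t ht).continuousAt.continuousWithinAt)
    (fun t ht => (hR t ⟨ht.1, ht.2.le⟩).hasDerivWithinAt) (by simp [R]) hB hR'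
    (right_mem_Icc.mpr zero_le_one)
  convert key using 1
  · simp only [R, v, one_smul, add_sub_cancel]
    abel_nf
  · ring

theorem norm_newton_step_sub_root_le {s : Set E} (hs : Convex ℝ s)
    {f : E → F} {Df : E → E →L[ℝ] F} (hf : ∀ u ∈ s, HasFDerivAt f (Df u) u)
    {u x : E} (hu : u ∈ s) (hx : x ∈ s) (hroot : f x = 0) {θ : ℝ}
    (hLip : ∀ v ∈ s, ‖Df v - Df u‖ ≤ θ * ‖v - u‖)
    {G : F →L[ℝ] E} (hG : G.comp (Df u) = ContinuousLinearMap.id ℝ E) {K : ℝ} (hGK : ‖G‖ ≤ K) :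
    ‖u - G (f u) - x‖ ≤ K * (θ / 2 * ‖u - x‖ ^ 2) := by
  have hGDf : G (Df u (u - x)) = u - x := by rw [← ContinuousLinearMap.comp_apply, hG]; rfl
  have herr : u - G (f u) - x = G (f x - f u - Df u (x - u)) := by
    rw [hroot, ← neg_sub u x, map_neg, map_sub, map_sub, map_neg, map_zero, hGDf]
    abel
  calc ‖u - G (f u) - x‖ ≤ ‖G‖ * ‖f x - f u - Df u (x - u)‖ := herr ▸ G.le_opNorm _
    _ ≤ K * ‖f x - f u - Df u (x - u)‖ := by gcongr
    _ ≤ K * (θ / 2 * ‖u - x‖ ^ 2) := by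
        gcongr
        · exact (norm_nonneg G).trans hGK
        · rw [norm_sub_rev u x]
          exact hs.norm_image_sub_sub_fderiv_le_of_lipschitz hf hu hx hLip

end

theorem mul_le_of_nonneg_of_le_div {a b c : ℝ} (ha : 0 ≤ a) (hb : 0 ≤ b) (h : a ≤ b / c) :
    c * a ≤ b := by
  rcases le_or_gt c 0 with hc | hc
  · nlinarith
  · rw [mul_comm]
    exact (le_div_iff₀ hc).mp h

theorem tendsto_of_norm_sub_succ_le_mul {E : Type*} [SeminormedAddCommGroup E]
    {U : ℕ → E} {a : E} {c : ℝ} (hc₀ : 0 ≤ c) (hc₁ : c < 1)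
    (hU : ∀ n, ‖U (n + 1) - a‖ ≤ c * ‖U n - a‖) : Tendsto U atTop (𝓝 a) := by
  rw [tendsto_iff_norm_sub_tendsto_zero]
  refine squeeze_zero (fun n => norm_nonneg _)
    (fun n => le_geom (u := fun n => ‖U n - a‖) hc₀ n fun k _ => hU k) ?_
  simpa using (tendsto_pow_atTop_nhds_zero_of_lt_one hc₀ hc₁).mul_const ‖U 0 - a‖

theorem newton_quadratic_convergence_general
    {E : Type*} [NormedAddCommGroup E] [NormedSpace ℝ E]
    (O : Set E) (hOconv : Convex ℝ O)
    (f : E → E) (Df : E → (E →L[ℝ] E)) (g : E → (E →L[ℝ] E))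
    (hf : ∀ u ∈ O, HasFDerivAt f (Df u) u)
    (hinv₂ : ∀ u ∈ O, (g u).comp (Df u) = ContinuousLinearMap.id ℝ E)
    (θ θbar : ℝ)
    (hLip : ∀ u ∈ O, ∀ v ∈ O, ‖Df u - Df v‖ ≤ θ * ‖u - v‖)
    (hLipInv : ∀ u ∈ O, ∀ v ∈ O, ‖g u - g v‖ ≤ θbar * ‖u - v‖)
    (ustar : E) (hustar : ustar ∈ O) (hroot : f ustar = 0)
    (ρ : ℝ) (hρ : ρ = ‖g ustar‖)
    (hball : {u : E | ‖u - ustar‖ ≤ min (ρ / θbar) (1 / (2 * θ * ρ))} ⊆ O)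
    (U : ℕ → E)
    (hU0 : ‖U 0 - ustar‖ ≤ min (ρ / θbar) (1 / (2 * θ * ρ)))
    (hUrec : ∀ n, U (n + 1) = U n - g (U n) (f (U n))) :
    (∀ n, ‖U n - ustar‖ ≤ min (ρ / θbar) (1 / (2 * θ * ρ))) ∧
    Tendsto U atTop (𝓝 ustar) ∧
    (∀ n, ‖U (n + 1) - ustar‖ ≤ ρ * θ * ‖U n - ustar‖ ^ 2) := by
  set r := min (ρ / θbar) (1 / (2 * θ * ρ))
  have hρ₀ : 0 ≤ ρ := hρ ▸ norm_nonneg _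
  have step : ∀ u, ‖u - ustar‖ ≤ r → ‖u - g u (f u) - ustar‖ ≤ ρ * θ * ‖u - ustar‖ ^ 2 ∧
      ρ * θ * ‖u - ustar‖ ^ 2 ≤ ‖u - ustar‖ / 2 := by
    intro u hu
    have hu₀ := norm_nonneg (u - ustar)
    have huO := hball hu
    have hg : ‖g u‖ ≤ 2 * ρ := by
      have hθbar : θbar * ‖u - ustar‖ ≤ ρ :=
        mul_le_of_nonneg_of_le_div hu₀ hρ₀ (hu.trans (min_le_left _ _))
      linarith [norm_le_insert' (g u) (g ustar), hLipInv u huO ustar hustar]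
    have hsmall : 2 * θ * ρ * ‖u - ustar‖ ≤ 1 :=
      mul_le_of_nonneg_of_le_div hu₀ zero_le_one (hu.trans (min_le_right _ _))
    refine ⟨?_, by nlinarith⟩
    exact (norm_newton_step_sub_root_le hOconv hf huO hustar hroot
      (fun v hv => hLip v hv u huO) (hinv₂ u huO) hg).trans_eq (by ring)
  have hmem : ∀ n, ‖U n - ustar‖ ≤ r := by
    intro n
    induction n with
    | zero => exact hU0
    | succ n ih =>
        obtain ⟨hquad, hhalf⟩ := step _ ih
        rw [hUrec]
        linarith [norm_nonneg (U n - ustar)]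
  have hstep n := hUrec n ▸ step _ (hmem n)
  refine ⟨hmem, tendsto_of_norm_sub_succ_le_mul (c := 1 / 2) (by norm_num) (by norm_num)
    fun n => ?_, fun n => (hstep n).1⟩
  linarith [(hstep n).1, (hstep n).2]

/-- Newton's method: quadratic convergence. The iterates stay in the ball
`‖u - u*‖ ≤ min (ρ*/θ̄) (1/(2θρ*))`, converge to the root `u*`, and satisfy the
quadratic error estimate `‖u⁽ⁿ⁺¹⁾ − u*‖ ≤ ρ* θ ‖u⁽ⁿ⁾ − u*‖²`. -/
theorem newton_quadratic_convergence
    {E : Type*} [NormedAddCommGroup E] [NormedSpace ℝ E] [FiniteDimensional ℝ E]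
    (O : Set E) (hO : IsOpen O) (hOconv : Convex ℝ O)
    (f : E → E) (Df : E → (E →L[ℝ] E)) (g : E → (E →L[ℝ] E))
    (hf : ∀ u ∈ O, HasFDerivAt f (Df u) u)
    (hf' : ∀ u ∈ O, DifferentiableAt ℝ Df u)  -- f twice differentiable on O
    (hinv₁ : ∀ u ∈ O, (Df u).comp (g u) = ContinuousLinearMap.id ℝ E)
    (hinv₂ : ∀ u ∈ O, (g u).comp (Df u) = ContinuousLinearMap.id ℝ E)
    (θ θbar : ℝ)
    (hLip : ∀ u ∈ O, ∀ v ∈ O, ‖Df u - Df v‖ ≤ θ * ‖u - v‖)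
    (hLipInv : ∀ u ∈ O, ∀ v ∈ O, ‖g u - g v‖ ≤ θbar * ‖u - v‖)
    (ustar : E) (hustar : ustar ∈ O) (hroot : f ustar = 0)
    (ρ : ℝ) (hρ : ρ = ‖g ustar‖)
    (hball : {u : E | ‖u - ustar‖ ≤ min (ρ / θbar) (1 / (2 * θ * ρ))} ⊆ O)
    (U : ℕ → E)
    (hU0 : ‖U 0 - ustar‖ ≤ min (ρ / θbar) (1 / (2 * θ * ρ)))
    (hUrec : ∀ n, U (n + 1) = U n - g (U n) (f (U n))) :
    (∀ n, ‖U n - ustar‖ ≤ min (ρ / θbar) (1 / (2 * θ * ρ))) ∧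
    Tendsto U atTop (𝓝 ustar) ∧
    (∀ n, ‖U (n + 1) - ustar‖ ≤ ρ * θ * ‖U n - ustar‖ ^ 2) :=
  newton_quadratic_convergence_general O hOconv f Df g hf hinv₂ θ θbar hLip hLipInv ustar hustar
    hroot ρ hρ hball U hU0 hUrec
end

section
/- Under the hypotheses of the Newton convergence setup, if ‖u⁽ⁿ⁾ − u*‖ ≤ min(ρ*/θ̄, 1/(2θρ*)), then the next Newton iterate satisfies ‖u⁽ⁿ⁺¹⁾ − u*‖ ≤ (1/2)‖u⁽ⁿ⁾ − u*‖; in particular the distance to u* is halved at each step. -/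
/-!
Write `e = u − u*`. Since `(Df u)⁻¹ ∘ Df u = id` and `f u* = 0`, the Newton error is
`u⁺ − u* = −(Df u)⁻¹ (f u − f u* − Df u e)`. The Lipschitz bound on `Df` makes the bracket at most
`θ‖e‖²/2`, and the Lipschitz bound on the inverse gives `‖(Df u)⁻¹‖ ≤ ρ* + θ̄‖e‖ ≤ 2ρ*`. Hence
`‖u⁺ − u*‖ ≤ θρ*‖e‖² ≤ ‖e‖/2` as soon as `‖e‖ ≤ 1/(2θρ*)`.
-/

open Set

section

variable {E F : Type*} [NormedAddCommGroup E] [NormedSpace ℝ E]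
  [NormedAddCommGroup F] [NormedSpace ℝ F]

theorem norm_sub_sub_fderiv_le_of_lipschitz_on_segment {f : E → F} {Df : E → E →L[ℝ] F}
    {a b : E} {θ : ℝ} (hf : ∀ x ∈ segment ℝ a b, HasFDerivAt f (Df x) x)
    (hLip : ∀ x ∈ segment ℝ a b, ‖Df x - Df b‖ ≤ θ * ‖x - b‖) :
    ‖f b - f a - Df b (b - a)‖ ≤ θ / 2 * ‖b - a‖ ^ 2 := by
  set d := b - a with hd
  have hmem : ∀ t ∈ Icc (0 : ℝ) 1, a + t • d ∈ segment ℝ a b := fun t ht =>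
    segment_eq_image' ℝ a b ▸ mem_image_of_mem _ ht
  have hderiv : ∀ t ∈ Icc (0 : ℝ) 1, HasDerivAt (fun s : ℝ => f (a + s • d) - f a - s • Df b d)
      (Df (a + t • d) d - Df b d) t := by
    intro t ht
    have hline : HasDerivAt (fun s : ℝ => a + s • d) d t := by
      simpa using ((hasDerivAt_id t).smul_const d).const_add a
    exact (((hf _ (hmem t ht)).comp_hasDerivAt t hline).sub_const (f a)).sub
      (by simpa using (hasDerivAt_id t).smul_const (Df b d))
  have hbound : ∀ t ∈ Ico (0 : ℝ) 1,
      ‖Df (a + t • d) d - Df b d‖ ≤ θ * ‖d‖ ^ 2 * (1 - t) := by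
    intro t ht
    have hdist : ‖a + t • d - b‖ = (1 - t) * ‖d‖ := by
      rw [show a + t • d - b = (t - 1) • d by rw [hd, sub_smul, one_smul]; abel, norm_smul,
        Real.norm_of_nonpos (by linarith [ht.2])]
      ring
    calc ‖Df (a + t • d) d - Df b d‖ = ‖(Df (a + t • d) - Df b) d‖ := by
          rw [sub_apply]
      _ ≤ ‖Df (a + t • d) - Df b‖ * ‖d‖ := (Df (a + t • d) - Df b).le_opNorm d
      _ ≤ θ * ‖a + t • d - b‖ * ‖d‖ := by
          gcongr; exact hLip _ (hmem t (Ico_subset_Icc_self ht))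
      _ = θ * ‖d‖ ^ 2 * (1 - t) := by rw [hdist]; ring
  have hB : ∀ t : ℝ, HasDerivAt (fun s : ℝ => θ * ‖d‖ ^ 2 * (s - s ^ 2 / 2))
      (θ * ‖d‖ ^ 2 * (1 - t)) t := by
    intro t
    have hq : HasDerivAt (fun s : ℝ => s - s ^ 2 / 2) (1 - t) t :=
      ((hasDerivAt_id' t).sub ((hasDerivAt_pow 2 t).div_const 2)).congr_deriv (by norm_num)
    exact hq.const_mul _
  -- Fencing against `θ‖d‖²(t - t²/2)` gains the factor `1/2` over the plain mean value bound.
  have hfence := image_norm_le_of_norm_deriv_right_le_deriv_boundary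
    (fun t ht => (hderiv t ht).continuousAt.continuousWithinAt)
    (fun t ht => (hderiv t (Ico_subset_Icc_self ht)).hasDerivWithinAt) (by simp) hB hbound
    (right_mem_Icc.2 zero_le_one)
  rw [one_smul, one_smul, hd, add_sub_cancel] at hfence
  linarith

theorem norm_sub_apply_sub_le_of_comp_eq_id {A : E →L[ℝ] F} {B : F →L[ℝ] E}
    (hBA : B.comp A = ContinuousLinearMap.id ℝ E) (u x : E) (y : F) :
    ‖u - B y - x‖ ≤ ‖B‖ * ‖y - A (u - x)‖ := by
  have hstep : u - B y - x = -B (y - A (u - x)) := by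
    rw [map_sub, ← ContinuousLinearMap.comp_apply, hBA, ContinuousLinearMap.id_apply]
    abel
  rw [hstep, norm_neg]
  exact B.le_opNorm _

end

theorem mul_mul_sq_le_half_of_le_min {G ρ θ θbar r : ℝ} (hr : 0 ≤ r) (hθ : 0 ≤ θ * r)
    (hθbar : 0 ≤ θbar * r) (hG : G ≤ ρ + θbar * r)
    (hclose : r ≤ min (ρ / θbar) (1 / (2 * θ * ρ))) :
    G * (θ / 2 * r ^ 2) ≤ 1 / 2 * r := by
  rcases hr.eq_or_lt with rfl | hr
  · simp
  have hθbar : 0 < θbar := by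
    rcases (nonneg_of_mul_nonneg_left hθbar hr).eq_or_lt with h | h
    · rw [← h, div_zero] at hclose
      linarith [hclose.trans (min_le_left _ _)]
    · exact h
  have hθbar_r : θbar * r ≤ ρ := (le_div_iff₀' hθbar).1 (hclose.trans (min_le_left _ _))
  have hρ : 0 < ρ := by nlinarith [mul_pos hθbar hr]
  rcases (nonneg_of_mul_nonneg_left hθ hr).eq_or_lt with rfl | hθ
  · rw [zero_div, zero_mul, mul_zero]
    positivity
  have hr_θρ : r * (2 * θ * ρ) ≤ 1 :=
    (le_div_iff₀ (by positivity)).1 (hclose.trans (min_le_right _ _))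
  calc G * (θ / 2 * r ^ 2) ≤ (2 * ρ) * (θ / 2 * r ^ 2) := by gcongr; linarith
    _ = 1 / 2 * r * (r * (2 * θ * ρ)) := by ring
    _ ≤ 1 / 2 * r * 1 := by gcongr
    _ = 1 / 2 * r := mul_one _

theorem newton_error_halving_general
    {E : Type*} [NormedAddCommGroup E] [NormedSpace ℝ E]
    (O : Set E)
    (f : E → E) (Df : E → (E →L[ℝ] E)) (g : E → (E →L[ℝ] E))
    (hf : ∀ u ∈ O, HasFDerivAt f (Df u) u)
    (hinv₂ : ∀ u ∈ O, (g u).comp (Df u) = ContinuousLinearMap.id ℝ E)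
    (θ θbar : ℝ)
    (hLip : ∀ u ∈ O, ∀ v ∈ O, ‖Df u - Df v‖ ≤ θ * ‖u - v‖)
    (hLipInv : ∀ u ∈ O, ∀ v ∈ O, ‖g u - g v‖ ≤ θbar * ‖u - v‖)
    (ustar : E) (hustar : ustar ∈ O) (hroot : f ustar = 0)
    (ρ : ℝ) (hρ : ρ = ‖g ustar‖)
    (hball : {u : E | ‖u - ustar‖ ≤ min (ρ / θbar) (1 / (2 * θ * ρ))} ⊆ O)
    (un : ℕ → E) (n : ℕ)
    (hclose : ‖un n - ustar‖ ≤ min (ρ / θbar) (1 / (2 * θ * ρ)))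
    (hUrec : un (n + 1) = un n - g (un n) (f (un n))) :
    ‖un (n + 1) - ustar‖ ≤ (1 / 2) * ‖un n - ustar‖ := by
  set u := un n
  have hseg : segment ℝ ustar u ⊆ O := by
    have hR := (norm_nonneg _).trans hclose
    refine Subset.trans ?_ hball
    simpa [Metric.closedBall, dist_eq_norm] using (convex_closedBall ustar _).segment_subset
      (Metric.mem_closedBall_self hR) (by simpa [dist_eq_norm] using hclose)
  have huO : u ∈ O := hseg (right_mem_segment ℝ ustar u)
  have htaylor : ‖f u - Df u (u - ustar)‖ ≤ θ / 2 * ‖u - ustar‖ ^ 2 := by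
    simpa [hroot] using norm_sub_sub_fderiv_le_of_lipschitz_on_segment
      (fun x hx => hf x (hseg hx)) (fun x hx => hLip x (hseg hx) u huO)
  have hgu : ‖g u‖ ≤ ρ + θbar * ‖u - ustar‖ :=
    hρ ▸ (norm_le_norm_add_norm_sub' _ _).trans (add_le_add_right (hLipInv u huO ustar hustar) _)
  rw [hUrec]
  calc ‖u - g u (f u) - ustar‖ ≤ ‖g u‖ * ‖f u - Df u (u - ustar)‖ :=
        norm_sub_apply_sub_le_of_comp_eq_id (hinv₂ u huO) _ _ _
    _ ≤ ‖g u‖ * (θ / 2 * ‖u - ustar‖ ^ 2) := by gcongr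
    _ ≤ 1 / 2 * ‖u - ustar‖ := mul_mul_sq_le_half_of_le_min (norm_nonneg _)
        ((norm_nonneg _).trans (hLip u huO ustar hustar))
        ((norm_nonneg _).trans (hLipInv u huO ustar hustar)) hgu hclose

/-- In the Newton convergence setup, if `‖uₙ − u*‖ ≤ min (ρ*/θ̄) (1/(2θρ*))`,
then the next Newton iterate satisfies `‖uₙ₊₁ − u*‖ ≤ (1/2)‖uₙ − u*‖`. -/
theorem newton_error_halving
    {E : Type*} [NormedAddCommGroup E] [NormedSpace ℝ E] [FiniteDimensional ℝ E]
    (O : Set E) (hO : IsOpen O) (hOconv : Convex ℝ O)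
    (f : E → E) (Df : E → (E →L[ℝ] E)) (g : E → (E →L[ℝ] E))
    (hf : ∀ u ∈ O, HasFDerivAt f (Df u) u)
    (hinv₁ : ∀ u ∈ O, (Df u).comp (g u) = ContinuousLinearMap.id ℝ E)
    (hinv₂ : ∀ u ∈ O, (g u).comp (Df u) = ContinuousLinearMap.id ℝ E)
    (θ θbar : ℝ)
    (hLip : ∀ u ∈ O, ∀ v ∈ O, ‖Df u - Df v‖ ≤ θ * ‖u - v‖)
    (hLipInv : ∀ u ∈ O, ∀ v ∈ O, ‖g u - g v‖ ≤ θbar * ‖u - v‖)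
    (ustar : E) (hustar : ustar ∈ O) (hroot : f ustar = 0)
    (ρ : ℝ) (hρ : ρ = ‖g ustar‖)
    (hball : {u : E | ‖u - ustar‖ ≤ min (ρ / θbar) (1 / (2 * θ * ρ))} ⊆ O)
    (un : ℕ → E) (n : ℕ)
    (hclose : ‖un n - ustar‖ ≤ min (ρ / θbar) (1 / (2 * θ * ρ)))
    (hUrec : un (n + 1) = un n - g (un n) (f (un n))) :
    ‖un (n + 1) - ustar‖ ≤ (1 / 2) * ‖un n - ustar‖ :=
  newton_error_halving_general O f Df g hf hinv₂ θ θbar hLip hLipInv ustar hustar hroot ρ hρ hball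
    un n hclose hUrec
end

section
/- Let c ≠ 0, b > 0, X = ([0,b/c]/∼) × ([0,b]/∼), and Σ = {u ∈ C¹(X, ℝ^d) : u(t+s, x+cs) = u(t,x) for all s} the travelling waves with wave speed c. For a C¹ autonomous Lagrangian L and action S(u) = ∫∫ L(u, u_t, u_x) dx dt, a travelling wave u ∈ Σ is a stationary point of S with respect to all variations if and only if it is a stationary point of the restriction S_Σ with respect to variations through travelling waves; moreover, under the identification u(t,x) = f(x − ct) with f: [0,b]/∼ → ℝ^d, S_Σ(f) = (b/c) ∫₀^b L(f(ξ), −c f_ξ(ξ), f_ξ(ξ)) dξ. -/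
/-!
Write `T = b / c`. For a travelling wave `u(t, x) = f(x - c t)` the jet of `u` at `(t, x)` is the
jet `j(ξ) = (f, -c f', f')(ξ)` of the profile at `ξ = x - c t`, so the first variation of `S` at
`u` is `δ ↦ ∫₀^T ∫₀^b DL(j(x - c t)) (δ, ∂ₜδ, ∂ₓδ)`. Substituting `x = ξ + c t` and exchanging
the integrals, this only depends on the integrals of the jet of `δ` along the orbits
`t ↦ (t, ξ + c t)` of the symmetry group. These orbits close up because `c T = b`, so along them
`∫ ∂ₜδ = -c ∫ ∂ₓδ`, and the integrated jet is the profile jet of `h(ξ) = ∫₀^T δ(t, ξ + c t) dt`.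
Thus the variation of `S` along `δ` is `1 / T` times its variation along the travelling wave
`h(x - c t)`, and stationarity along travelling waves implies stationarity. The same substitution
computes `S(u)`.
-/

open MeasureTheory intervalIntegral Set Function Filter Metric

noncomputable section

/-- The action functional `S(w) = ∫₀^T ∫₀^b L(w, w_t, w_x) dx dt`. -/
def Sact {d : ℕ} (L : (Fin d → ℝ) → (Fin d → ℝ) → (Fin d → ℝ) → ℝ)
    (T b : ℝ) (w : ℝ → ℝ → (Fin d → ℝ)) : ℝ :=
  ∫ t in (0:ℝ)..T, ∫ x in (0:ℝ)..b,
    L (w t x) (deriv (fun τ => w τ x) t) (deriv (w t) x)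

section ParametricIntegral

variable {G H : Type*} [NormedAddCommGroup G] [NormedSpace ℝ G]
  [NormedAddCommGroup H] [NormedSpace ℝ H]

theorem hasDerivAt_intervalIntegral_of_continuous {F F' : ℝ → ℝ → G}
    (hF : Continuous (uncurry F)) (hF' : Continuous (uncurry F'))
    (hderiv : ∀ ε x, HasDerivAt (fun ε => F ε x) (F' ε x) ε) (a b ε₀ : ℝ) :
    HasDerivAt (fun ε => ∫ x in a..b, F ε x) (∫ x in a..b, F' ε₀ x) ε₀ := by
  obtain ⟨M, hM⟩ := (isCompact_closedBall ε₀ 1 |>.prod isCompact_uIcc).exists_bound_of_continuousOn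
      hF'.continuousOn
  refine (hasDerivAt_integral_of_dominated_loc_of_deriv_le (ball_mem_nhds ε₀ one_pos)
    (bound := fun _ => M)
    (Eventually.of_forall fun ε => (hF.comp (Continuous.prodMk_right ε)).aestronglyMeasurable)
    ((hF.comp (Continuous.prodMk_right ε₀)).intervalIntegrable a b)
    (hF'.comp (Continuous.prodMk_right ε₀)).aestronglyMeasurable ?_ intervalIntegrable_const
    (Eventually.of_forall fun x _ ε _ => hderiv ε x)).2
  exact Eventually.of_forall fun x hx ε hε =>
    hM (ε, x) ⟨ball_subset_closedBall hε, uIoc_subset_uIcc hx⟩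

theorem hasDerivAt_integral_integral_comp_add_smul {Λ : H → G} (hΛ : ContDiff ℝ 1 Λ)
    {V W : ℝ × ℝ → H} (hV : Continuous V) (hW : Continuous W) (a₁ b₁ a₂ b₂ : ℝ) :
    HasDerivAt (fun ε : ℝ => ∫ t in a₁..b₁, ∫ x in a₂..b₂, Λ (V (t, x) + ε • W (t, x)))
      (∫ t in a₁..b₁, ∫ x in a₂..b₂, fderiv ℝ Λ (V (t, x)) (W (t, x))) 0 := by
  have hΛc := hΛ.continuous
  have hΛ'c := hΛ.continuous_fderiv one_ne_zero
  have hpoint : ∀ p ε, HasDerivAt (fun ε : ℝ => Λ (V p + ε • W p))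
      (fderiv ℝ Λ (V p + ε • W p) (W p)) ε := fun p ε => by
    simpa [comp_def] using ((hΛ.differentiable one_ne_zero _).hasFDerivAt.comp_hasDerivAt ε
      (((hasDerivAt_id ε).smul_const (W p)).const_add (V p)))
  have hinner : ∀ t ε, HasDerivAt (fun ε => ∫ x in a₂..b₂, Λ (V (t, x) + ε • W (t, x)))
      (∫ x in a₂..b₂, fderiv ℝ Λ (V (t, x) + ε • W (t, x)) (W (t, x))) ε := fun t ε =>
    hasDerivAt_intervalIntegral_of_continuous (by fun_prop) (by fun_prop)
      (fun ε x => hpoint (t, x) ε) a₂ b₂ ε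
  simpa using hasDerivAt_intervalIntegral_of_continuous
    (F := fun ε t => ∫ x in a₂..b₂, Λ (V (t, x) + ε • W (t, x)))
    (continuous_parametric_intervalIntegral_of_continuous' (by fun_prop) a₂ b₂)
    (continuous_parametric_intervalIntegral_of_continuous' (by fun_prop) a₂ b₂)
    (fun ε t => hinner t ε) a₁ b₁ 0

end ParametricIntegral

section FirstJet

variable {E : Type*} [NormedAddCommGroup E] [NormedSpace ℝ E]

def firstJet (w : ℝ → ℝ → E) (p : ℝ × ℝ) : E × E × E :=
  (uncurry w p, fderiv ℝ (uncurry w) p (1, 0), fderiv ℝ (uncurry w) p (0, 1))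

def waveJet (c : ℝ) (f : ℝ → E) (ξ : ℝ) : E × E × E :=
  (f ξ, (-c) • deriv f ξ, deriv f ξ)

theorem hasDerivAt_uncurry_comp {w : ℝ → ℝ → E} {g₁ g₂ : ℝ → ℝ} {k₁ k₂ t : ℝ}
    (hw : DifferentiableAt ℝ (uncurry w) (g₁ t, g₂ t)) (h₁ : HasDerivAt g₁ k₁ t)
    (h₂ : HasDerivAt g₂ k₂ t) :
    HasDerivAt (fun τ => w (g₁ τ) (g₂ τ)) (fderiv ℝ (uncurry w) (g₁ t, g₂ t) (k₁, k₂)) t :=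
  hw.hasFDerivAt.comp_hasDerivAt (f := fun τ => (g₁ τ, g₂ τ)) t (h₁.prodMk h₂)

theorem hasDerivAt_uncurry_left {w : ℝ → ℝ → E} {t x : ℝ}
    (hw : DifferentiableAt ℝ (uncurry w) (t, x)) :
    HasDerivAt (fun τ => w τ x) (fderiv ℝ (uncurry w) (t, x) (1, 0)) t :=
  hasDerivAt_uncurry_comp hw (hasDerivAt_id t) (hasDerivAt_const t x)

theorem hasDerivAt_uncurry_right {w : ℝ → ℝ → E} {t x : ℝ}
    (hw : DifferentiableAt ℝ (uncurry w) (t, x)) :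
    HasDerivAt (fun y => w t y) (fderiv ℝ (uncurry w) (t, x) (0, 1)) x :=
  hasDerivAt_uncurry_comp hw (hasDerivAt_const x t) (hasDerivAt_id x)

theorem continuous_firstJet {w : ℝ → ℝ → E} (hw : ContDiff ℝ 1 (uncurry w)) :
    Continuous (firstJet w) := by
  have h := hw.continuous_fderiv one_ne_zero
  unfold firstJet
  fun_prop

theorem firstJet_add_smul {u δ : ℝ → ℝ → E} (hu : Differentiable ℝ (uncurry u))
    (hδ : Differentiable ℝ (uncurry δ)) (ε : ℝ) :
    firstJet (fun t x => u t x + ε • δ t x) = firstJet u + ε • firstJet δ := by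
  have h : uncurry (fun t x => u t x + ε • δ t x) = uncurry u + ε • uncurry δ := rfl
  ext1 p
  simp only [firstJet, h, fderiv_add (hu p) ((hδ p).const_smul ε), fderiv_const_smul (hδ p)]
  rfl

theorem firstJet_add_period {w : ℝ → ℝ → E} {b : ℝ} (hw : ∀ t x, w t (x + b) = w t x)
    (t x : ℝ) : firstJet w (t, x + b) = firstJet w (t, x) := by
  have hw' : ∀ p : ℝ × ℝ, uncurry w (p + (0, b)) = uncurry w p := fun ⟨t, x⟩ => by
    simpa using hw t x
  rw [show ((t, x + b) : ℝ × ℝ) = (t, x) + (0, b) by simp]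
  simp only [firstJet, hw', ← fderiv_comp_add_right]

theorem contDiff_uncurry_travellingWave {n : WithTop ℕ∞} {f : ℝ → E} (hf : ContDiff ℝ n f)
    (c : ℝ) : ContDiff ℝ n (uncurry fun t x => f (x - c * t)) :=
  hf.comp (by fun_prop)

theorem firstJet_travellingWave {f : ℝ → E} (hf : Differentiable ℝ f) (c t x : ℝ) :
    firstJet (fun t x => f (x - c * t)) (t, x) = waveJet c f (x - c * t) := by
  have hw : Differentiable ℝ (uncurry fun t x => f (x - c * t)) :=
    hf.comp (by fun_prop)
  have ht : HasDerivAt (fun τ => f (x - c * τ)) ((-c) • deriv f (x - c * t)) t := by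
    simpa [comp_def] using (hf _).hasDerivAt.scomp t (((hasDerivAt_id t).const_mul c).const_sub x)
  have hx : HasDerivAt (fun y => f (y - c * t)) (deriv f (x - c * t)) x := by
    simpa [comp_def] using (hf _).hasDerivAt.scomp x ((hasDerivAt_id x).sub_const (c * t))
  simp only [firstJet, waveJet, (hasDerivAt_uncurry_left (hw _)).unique ht,
    (hasDerivAt_uncurry_right (hw _)).unique hx]
  rfl

end FirstJet

section TravellingWave

variable {E F : Type*} [NormedAddCommGroup E] [NormedSpace ℝ E]
  [NormedAddCommGroup F] [NormedSpace ℝ F]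

theorem Function.Periodic.intervalIntegral_comp_sub {g : ℝ → F} {b : ℝ} (hg : Periodic g b)
    (a : ℝ) : ∫ x in (0:ℝ)..b, g (x - a) = ∫ x in (0:ℝ)..b, g x := by
  rw [integral_comp_sub_right, zero_sub, ← neg_add_eq_sub]
  exact hg.intervalIntegral_add_eq (-a) 0 |>.trans (by rw [zero_add])

theorem integral_integral_comp_sub_mul [CompleteSpace F] {g : ℝ → F} {b : ℝ} (hg : Periodic g b)
    (c T : ℝ) :
    ∫ t in (0:ℝ)..T, ∫ x in (0:ℝ)..b, g (x - c * t) = T • ∫ ξ in (0:ℝ)..b, g ξ := by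
  simp only [hg.intervalIntegral_comp_sub]
  rw [intervalIntegral.integral_const, sub_zero]

theorem continuous_waveJet {f : ℝ → E} (hf : ContDiff ℝ 1 f) (c : ℝ) :
    Continuous (waveJet c f) := by
  have h := hf.continuous_deriv le_rfl
  have h' := hf.continuous
  unfold waveJet
  fun_prop

theorem periodic_waveJet {f : ℝ → E} {b : ℝ} (hf : Periodic f b) (c : ℝ) :
    Periodic (waveJet c f) b := by
  have hf' : Periodic (deriv f) b := fun ξ => by
    rw [← deriv_comp_add_const, show (fun y => f (y + b)) = f from funext hf]
  intro ξ
  simp only [waveJet, hf ξ, hf' ξ]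

/-- `T` times the average of `δ` over the orbit of `(0, ξ)` under
`s • (t, x) = (t + s, x + c s)`. -/
def travellingAverage (c T : ℝ) (δ : ℝ → ℝ → E) (ξ : ℝ) : E :=
  ∫ t in (0:ℝ)..T, δ t (ξ + c * t)

variable {c T : ℝ} {δ : ℝ → ℝ → E}

theorem hasDerivAt_travellingAverage (hδ : ContDiff ℝ 1 (uncurry δ)) (ξ : ℝ) :
    HasDerivAt (travellingAverage c T δ)
      (∫ t in (0:ℝ)..T, fderiv ℝ (uncurry δ) (t, ξ + c * t) (0, 1)) ξ := by
  have h := hδ.continuous_fderiv one_ne_zero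
  have h' := hδ.continuous
  exact hasDerivAt_intervalIntegral_of_continuous (F := fun ξ t => δ t (ξ + c * t))
    (by fun_prop) (by fun_prop)
    (fun ξ t => hasDerivAt_uncurry_comp (hδ.differentiable one_ne_zero _) (hasDerivAt_const ξ t)
      ((hasDerivAt_id ξ).add_const (c * t)))
    0 T ξ

theorem contDiff_travellingAverage (hδ : ContDiff ℝ 1 (uncurry δ)) :
    ContDiff ℝ 1 (travellingAverage c T δ) := by
  have h := hδ.continuous_fderiv one_ne_zero
  refine contDiff_one_iff_deriv.mpr
    ⟨fun ξ => (hasDerivAt_travellingAverage hδ ξ).differentiableAt, ?_⟩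
  rw [show deriv (travellingAverage c T δ) = _ from
    funext fun ξ => (hasDerivAt_travellingAverage hδ ξ).deriv]
  exact continuous_parametric_intervalIntegral_of_continuous' (by fun_prop) 0 T

theorem periodic_travellingAverage {b : ℝ} (hδx : ∀ t x, δ t (x + b) = δ t x) :
    Periodic (travellingAverage c T δ) b := fun ξ => by
  simp only [travellingAverage, add_right_comm ξ b, hδx]

end TravellingWave

section Symmetrisation

variable {E F : Type*} [NormedAddCommGroup E] [NormedSpace ℝ E] [CompleteSpace E]
  [NormedAddCommGroup F] [NormedSpace ℝ F]

theorem intervalIntegral_pair [CompleteSpace F] {f : ℝ → E} {g : ℝ → F} {a b : ℝ}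
    (hf : IntervalIntegrable f volume a b) (hg : IntervalIntegrable g volume a b) :
    ∫ x in a..b, (f x, g x) = (∫ x in a..b, f x, ∫ x in a..b, g x) := by
  simp only [intervalIntegral_eq_integral_uIoc, integral_pair hf.def' hg.def', Prod.smul_mk]

variable {c T : ℝ} {δ : ℝ → ℝ → E}

theorem integral_fderiv_fst_along_characteristic (hδ : ContDiff ℝ 1 (uncurry δ)) {ξ : ℝ}
    (hclosed : δ T (ξ + c * T) = δ 0 ξ) :
    ∫ t in (0:ℝ)..T, fderiv ℝ (uncurry δ) (t, ξ + c * t) (1, 0)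
      = (-c) • ∫ t in (0:ℝ)..T, fderiv ℝ (uncurry δ) (t, ξ + c * t) (0, 1) := by
  have h := hδ.continuous_fderiv one_ne_zero
  set P := fun t => fderiv ℝ (uncurry δ) (t, ξ + c * t) (1, 0)
  set Q := fun t => fderiv ℝ (uncurry δ) (t, ξ + c * t) (0, 1)
  have hP : Continuous P := by fun_prop
  have hQ : Continuous Q := by fun_prop
  have hderiv : ∀ t, HasDerivAt (fun t => δ t (ξ + c * t)) (P t + c • Q t) t := fun t => by
    refine (hasDerivAt_uncurry_comp (hδ.differentiable one_ne_zero _) (hasDerivAt_id t)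
      (((hasDerivAt_id t).const_mul c).const_add ξ)).congr_deriv ?_
    rw [← map_smul, ← map_add]
    simp
  have hFTC := integral_eq_sub_of_hasDerivAt (fun t _ => hderiv t)
    ((hP.add (hQ.const_smul c)).intervalIntegrable 0 T)
  rw [integral_add (g := fun t => c • Q t) (hP.intervalIntegrable _ _)
      ((hQ.const_smul c).intervalIntegrable _ _),
    intervalIntegral.integral_smul, hclosed, mul_zero, add_zero, sub_self] at hFTC
  rw [neg_smul, eq_neg_iff_add_eq_zero]
  exact hFTC

theorem integral_firstJet_along_characteristic (hδ : ContDiff ℝ 1 (uncurry δ)) {ξ : ℝ}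
    (hclosed : δ T (ξ + c * T) = δ 0 ξ) :
    ∫ t in (0:ℝ)..T, firstJet δ (t, ξ + c * t) = waveJet c (travellingAverage c T δ) ξ := by
  have h := hδ.continuous_fderiv one_ne_zero
  have h' := hδ.continuous
  simp only [firstJet]
  rw [intervalIntegral_pair (Continuous.intervalIntegrable (by fun_prop) _ _)
      (Continuous.intervalIntegrable (by fun_prop) _ _),
    intervalIntegral_pair (Continuous.intervalIntegrable (by fun_prop) _ _)
      (Continuous.intervalIntegrable (by fun_prop) _ _),
    integral_fderiv_fst_along_characteristic hδ hclosed,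
    ← (hasDerivAt_travellingAverage hδ ξ).deriv]
  rfl

theorem integral_integral_firstJet_eq_integral_waveJet [CompleteSpace F] {b : ℝ}
    (hcT : c * T = b) {D : ℝ → (E × E × E) →L[ℝ] F} (hD : Continuous D)
    (hDb : Periodic D b) (hδ : ContDiff ℝ 1 (uncurry δ))
    (hδt : ∀ t x, δ (t + T) x = δ t x) (hδx : ∀ t x, δ t (x + b) = δ t x) :
    ∫ t in (0:ℝ)..T, ∫ x in (0:ℝ)..b, D (x - c * t) (firstJet δ (t, x))
      = ∫ ξ in (0:ℝ)..b, D ξ (waveJet c (travellingAverage c T δ) ξ) := by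
  have hjet := continuous_firstJet hδ
  have hshift : ∀ t, ∫ x in (0:ℝ)..b, D (x - c * t) (firstJet δ (t, x))
      = ∫ ξ in (0:ℝ)..b, D ξ (firstJet δ (t, ξ + c * t)) := fun t => by
    have hper : Periodic (fun ξ => D ξ (firstJet δ (t, ξ + c * t))) b := fun ξ => by
      simp only [hDb ξ, add_right_comm ξ b, firstJet_add_period hδx]
    simpa only [sub_add_cancel] using hper.intervalIntegral_comp_sub (c * t)
  rw [integral_congr fun t _ => hshift t, intervalIntegral_intervalIntegral_swap
    ((Continuous.continuousOn (by fun_prop)).integrableOn_compact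
      (isCompact_uIcc.prod isCompact_uIcc) |>.mono_set
      (prod_mono uIoc_subset_uIcc uIoc_subset_uIcc))]
  refine integral_congr fun ξ _ => ?_
  rw [(D ξ).intervalIntegral_comp_comm (Continuous.intervalIntegrable (by fun_prop) _ _),
    integral_firstJet_along_characteristic hδ (by rw [hcT, hδx, ← zero_add T, hδt])]

end Symmetrisation

section Action

variable {d : ℕ} {L : (Fin d → ℝ) → (Fin d → ℝ) → (Fin d → ℝ) → ℝ}

theorem Sact_eq_integral_firstJet {w : ℝ → ℝ → (Fin d → ℝ)}
    (hw : Differentiable ℝ (uncurry w)) (T b : ℝ) :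
    Sact L T b w = ∫ t in (0:ℝ)..T, ∫ x in (0:ℝ)..b,
      (fun q : (Fin d → ℝ) × (Fin d → ℝ) × (Fin d → ℝ) => L q.1 q.2.1 q.2.2)
        (firstJet w (t, x)) := by
  refine integral_congr fun t _ => integral_congr fun x _ => ?_
  simp only [firstJet, (hasDerivAt_uncurry_left (hw (t, x))).deriv,
    (hasDerivAt_uncurry_right (hw (t, x))).deriv]
  rfl

theorem hasDerivAt_Sact_add_smul
    (hL : ContDiff ℝ 1
      (fun q : (Fin d → ℝ) × (Fin d → ℝ) × (Fin d → ℝ) => L q.1 q.2.1 q.2.2))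
    {u δ : ℝ → ℝ → (Fin d → ℝ)} (hu : ContDiff ℝ 1 (uncurry u)) (hδ : ContDiff ℝ 1 (uncurry δ))
    (T b : ℝ) :
    HasDerivAt (fun ε : ℝ => Sact L T b (fun t x => u t x + ε • δ t x))
      (∫ t in (0:ℝ)..T, ∫ x in (0:ℝ)..b,
        fderiv ℝ (fun q : (Fin d → ℝ) × (Fin d → ℝ) × (Fin d → ℝ) => L q.1 q.2.1 q.2.2)
          (firstJet u (t, x)) (firstJet δ (t, x))) 0 := by
  have hud := hu.differentiable one_ne_zero
  have hδd := hδ.differentiable one_ne_zero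
  have hS : ∀ ε : ℝ, Sact L T b (fun t x => u t x + ε • δ t x)
      = ∫ t in (0:ℝ)..T, ∫ x in (0:ℝ)..b,
        (fun q : (Fin d → ℝ) × (Fin d → ℝ) × (Fin d → ℝ) => L q.1 q.2.1 q.2.2)
        (firstJet u (t, x) + ε • firstJet δ (t, x)) := fun ε => by
    rw [Sact_eq_integral_firstJet (hud.add (hδd.const_smul ε)), firstJet_add_smul hud hδd]
    rfl
  simp only [hS]
  exact hasDerivAt_integral_integral_comp_add_smul hL (continuous_firstJet hu)
    (continuous_firstJet hδ) 0 T 0 b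

theorem Sact_travellingWave {f : ℝ → (Fin d → ℝ)} (hf : Differentiable ℝ f) {b : ℝ}
    (hfb : Periodic f b) (c T : ℝ) :
    Sact L T b (fun t x => f (x - c * t))
      = T * ∫ ξ in (0:ℝ)..b, L (f ξ) ((-c) • deriv f ξ) (deriv f ξ) := by
  rw [Sact_eq_integral_firstJet (w := fun t x => f (x - c * t)) (hf.comp (by fun_prop))]
  simp only [firstJet_travellingWave hf]
  exact integral_integral_comp_sub_mul
    (g := fun ξ => (fun q : (Fin d → ℝ) × (Fin d → ℝ) × (Fin d → ℝ) => L q.1 q.2.1 q.2.2)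
      (waveJet c f ξ)) (fun ξ => by simp only [periodic_waveJet hfb c ξ]) c T

theorem deriv_Sact_travellingAverage
    (hL : ContDiff ℝ 1
      (fun q : (Fin d → ℝ) × (Fin d → ℝ) × (Fin d → ℝ) => L q.1 q.2.1 q.2.2))
    {c T b : ℝ} (hcT : c * T = b) {f : ℝ → (Fin d → ℝ)} (hf : ContDiff ℝ 1 f)
    (hfb : Periodic f b) {δ : ℝ → ℝ → (Fin d → ℝ)} (hδ : ContDiff ℝ 1 (uncurry δ))
    (hδt : ∀ t x, δ (t + T) x = δ t x) (hδx : ∀ t x, δ t (x + b) = δ t x) :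
    deriv (fun ε : ℝ => Sact L T b fun t x =>
        f (x - c * t) + ε • travellingAverage c T δ (x - c * t)) 0
      = T * deriv (fun ε : ℝ => Sact L T b fun t x => f (x - c * t) + ε • δ t x) 0 := by
  set Λ := fun q : (Fin d → ℝ) × (Fin d → ℝ) × (Fin d → ℝ) => L q.1 q.2.1 q.2.2
  have hvar : ∀ w : ℝ → ℝ → (Fin d → ℝ), ContDiff ℝ 1 (uncurry w) →
      deriv (fun ε : ℝ => Sact L T b fun t x => f (x - c * t) + ε • w t x) 0
        = ∫ t in (0:ℝ)..T, ∫ x in (0:ℝ)..b,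
            fderiv ℝ Λ (waveJet c f (x - c * t)) (firstJet w (t, x)) := fun w hw => by
    rw [(hasDerivAt_Sact_add_smul hL (contDiff_uncurry_travellingWave hf c) hw T b).deriv]
    simp only [firstJet_travellingWave (hf.differentiable one_ne_zero)]
    rfl
  have hh := contDiff_travellingAverage (c := c) (T := T) hδ
  have hD : Continuous fun ξ => fderiv ℝ Λ (waveJet c f ξ) :=
    (hL.continuous_fderiv one_ne_zero).comp (continuous_waveJet hf c)
  have hDb : Periodic (fun ξ => fderiv ℝ Λ (waveJet c f ξ)) b := fun ξ => by
    simp only [periodic_waveJet hfb c ξ]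
  have hh' : Periodic (waveJet c (travellingAverage c T δ)) b :=
    periodic_waveJet (periodic_travellingAverage hδx) c
  rw [hvar _ (contDiff_uncurry_travellingWave hh c), hvar δ hδ,
    integral_integral_firstJet_eq_integral_waveJet hcT hD hDb hδ hδt hδx]
  simp only [firstJet_travellingWave (hh.differentiable one_ne_zero)]
  rw [integral_integral_comp_sub_mul
    (g := fun ξ => fderiv ℝ Λ (waveJet c f ξ) (waveJet c (travellingAverage c T δ) ξ))
    (fun ξ => by simp only [periodic_waveJet hfb c ξ, hh' ξ]), smul_eq_mul]

end Action

theorem symmetric_criticality_travelling_waves_general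
    {d : ℕ} (c b : ℝ) (hc : c ≠ 0) (hb : 0 < b)
    (L : (Fin d → ℝ) → (Fin d → ℝ) → (Fin d → ℝ) → ℝ)
    (hL : ContDiff ℝ 1
      (fun q : (Fin d → ℝ) × (Fin d → ℝ) × (Fin d → ℝ) => L q.1 q.2.1 q.2.2))
    (u : ℝ → ℝ → (Fin d → ℝ))
    (f : ℝ → (Fin d → ℝ)) (hf : ContDiff ℝ 1 f)
    (hfper : ∀ ξ, f (ξ + b) = f ξ)
    (huf : ∀ t x, u t x = f (x - c * t)) :
    ((∀ δ : ℝ → ℝ → (Fin d → ℝ),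
        ContDiff ℝ 1 (fun p : ℝ × ℝ => δ p.1 p.2) →
        (∀ t x, δ (t + b / c) x = δ t x) →
        (∀ t x, δ t (x + b) = δ t x) →
        deriv (fun ε : ℝ =>
          Sact L (b / c) b (fun t x => u t x + ε • δ t x)) 0 = 0)
      ↔
      (∀ δ : ℝ → ℝ → (Fin d → ℝ),
        ContDiff ℝ 1 (fun p : ℝ × ℝ => δ p.1 p.2) →
        (∀ t x, δ (t + b / c) x = δ t x) →
        (∀ t x, δ t (x + b) = δ t x) →
        (∀ s t x, δ (t + s) (x + c * s) = δ t x) →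
        deriv (fun ε : ℝ =>
          Sact L (b / c) b (fun t x => u t x + ε • δ t x)) 0 = 0))
    ∧ Sact L (b / c) b u
        = (b / c) * ∫ ξ in (0:ℝ)..b, L (f ξ) ((-c) • deriv f ξ) (deriv f ξ) := by
  obtain rfl : u = fun t x => f (x - c * t) := funext₂ huf
  refine ⟨⟨fun h δ hδ hδt hδx _ => h δ hδ hδt hδx, fun h δ hδ hδt hδx => ?_⟩,
    Sact_travellingWave (hf.differentiable one_ne_zero) hfper c (b / c)⟩
  have hcT : c * (b / c) = b := mul_div_cancel₀ b hc
  have hper := periodic_travellingAverage (c := c) (T := b / c) hδx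
  have hsym := h (fun t x => travellingAverage c (b / c) δ (x - c * t))
    (contDiff_uncurry_travellingWave (contDiff_travellingAverage hδ) c)
    (fun t x => by rw [mul_add, hcT, ← sub_sub, hper.sub_eq])
    (fun t x => by rw [add_sub_right_comm, hper])
    (fun s t x => by congr 1; ring)
  rw [deriv_Sact_travellingAverage hL hcT hf hfper hδ hδt hδx] at hsym
  exact (mul_eq_zero.mp hsym).resolve_left (div_ne_zero hb.ne' hc)

/-- Palais' principle of symmetric criticality for travelling waves: a travelling
wave `u ∈ Σ` is a stationary point of `S` with respect to all (periodic C¹)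
variations iff it is stationary with respect to variations through travelling
waves; moreover, with `u(t,x) = f(x − ct)`,
`S_Σ(f) = (b/c) ∫₀^b L(f, −c f_ξ, f_ξ) dξ`. -/
theorem symmetric_criticality_travelling_waves
    {d : ℕ} (c b : ℝ) (hc : c ≠ 0) (hb : 0 < b)
    (L : (Fin d → ℝ) → (Fin d → ℝ) → (Fin d → ℝ) → ℝ)
    (hL : ContDiff ℝ 1
      (fun q : (Fin d → ℝ) × (Fin d → ℝ) × (Fin d → ℝ) => L q.1 q.2.1 q.2.2))
    (u : ℝ → ℝ → (Fin d → ℝ))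
    (hu : ContDiff ℝ 1 (fun p : ℝ × ℝ => u p.1 p.2))
    (huper_t : ∀ t x, u (t + b / c) x = u t x)
    (huper_x : ∀ t x, u t (x + b) = u t x)
    (hTW : ∀ s t x, u (t + s) (x + c * s) = u t x)
    (f : ℝ → (Fin d → ℝ)) (hf : ContDiff ℝ 1 f)
    (hfper : ∀ ξ, f (ξ + b) = f ξ)
    (huf : ∀ t x, u t x = f (x - c * t)) :
    ((∀ δ : ℝ → ℝ → (Fin d → ℝ),
        ContDiff ℝ 1 (fun p : ℝ × ℝ => δ p.1 p.2) →
        (∀ t x, δ (t + b / c) x = δ t x) →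
        (∀ t x, δ t (x + b) = δ t x) →
        deriv (fun ε : ℝ =>
          Sact L (b / c) b (fun t x => u t x + ε • δ t x)) 0 = 0)
      ↔
      (∀ δ : ℝ → ℝ → (Fin d → ℝ),
        ContDiff ℝ 1 (fun p : ℝ × ℝ => δ p.1 p.2) →
        (∀ t x, δ (t + b / c) x = δ t x) →
        (∀ t x, δ t (x + b) = δ t x) →
        (∀ s t x, δ (t + s) (x + c * s) = δ t x) →
        deriv (fun ε : ℝ =>
          Sact L (b / c) b (fun t x => u t x + ε • δ t x)) 0 = 0))
    ∧ Sact L (b / c) b u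
        = (b / c) * ∫ ξ in (0:ℝ)..b, L (f ξ) ((-c) • deriv f ξ) (deriv f ξ) :=
  symmetric_criticality_travelling_waves_general c b hc hb L hL u f hf hfper huf
end
end

section
/- Let Δt, Δx > 0 and κ ∈ ℝ. The function u^i_j = α₁ sin(κ(jΔx − c iΔt)) + α₂ cos(κ(jΔx − c iΔt)) satisfies the 5-point discrete wave equation (u^{i−1}_j − 2u^i_j + u^{i+1}_j)/Δt² − (u^i_{j−1} − 2u^i_j + u^i_{j+1})/Δx² + u^i_j = 0 (quadratic potential V(u) = u²/2) for all i, j and all α₁, α₂ ∈ ℝ if and only if cos(κcΔt) = 1 − Δt²/2 + (Δt²/Δx²)(cos(κΔx) − 1). -/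
open Real

/-- Discrete dispersion relation: the discrete travelling-wave ansatz
`u^i_j = α₁ sin(κ(jΔx − ciΔt)) + α₂ cos(κ(jΔx − ciΔt))` satisfies the 5-point
discrete wave equation (quadratic potential) for all `i, j, α₁, α₂` iff
`cos(κcΔt) = 1 − Δt²/2 + (Δt²/Δx²)(cos(κΔx) − 1)`. -/
theorem discrete_wave_dispersion
    (Δt Δx : ℝ) (hΔt : 0 < Δt) (hΔx : 0 < Δx) (κ c : ℝ) :
    (∀ (i j : ℤ) (α₁ α₂ : ℝ),
      letI u : ℤ → ℤ → ℝ := fun i j =>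
        α₁ * Real.sin (κ * ((j : ℝ) * Δx - c * (i : ℝ) * Δt))
          + α₂ * Real.cos (κ * ((j : ℝ) * Δx - c * (i : ℝ) * Δt))
      (u (i - 1) j - 2 * u i j + u (i + 1) j) / Δt ^ 2
        - (u i (j - 1) - 2 * u i j + u i (j + 1)) / Δx ^ 2
        + u i j = 0)
    ↔ Real.cos (κ * c * Δt)
        = 1 - Δt ^ 2 / 2 + (Δt ^ 2 / Δx ^ 2) * (Real.cos (κ * Δx) - 1) := by
  have ht2 : (Δt:ℝ)^2 ≠ 0 := by positivity
  have hx2 : (Δx:ℝ)^2 ≠ 0 := by positivity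
  constructor
  · intro h
    have h0 := h 0 0 0 1
    simp only [Int.cast_zero, Int.cast_one, Int.cast_sub, Int.cast_add] at h0
    have e1 : κ * ((0:ℝ) * Δx - c * ((0:ℝ) - 1) * Δt) = κ * c * Δt := by ring
    have e2 : κ * ((0:ℝ) * Δx - c * ((0:ℝ) + 1) * Δt) = -(κ * c * Δt) := by ring
    have e3 : κ * (((0:ℝ) - 1) * Δx - c * 0 * Δt) = -(κ * Δx) := by ring
    have e4 : κ * (((0:ℝ) + 1) * Δx - c * 0 * Δt) = κ * Δx := by ring
    have e5 : κ * ((0:ℝ) * Δx - c * 0 * Δt) = 0 := by ring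
    rw [e1, e2, e3, e4, e5, Real.cos_neg, Real.cos_neg, Real.cos_zero] at h0
    field_simp at h0 ⊢
    linarith
  · intro h i j α₁ α₂
    simp only [Int.cast_sub, Int.cast_add, Int.cast_one]
    set θ := κ * ((j : ℝ) * Δx - c * (i : ℝ) * Δt) with hθ
    have e1 : κ * ((j:ℝ) * Δx - c * ((i:ℝ) - 1) * Δt) = θ + κ * c * Δt := by rw [hθ]; ring
    have e2 : κ * ((j:ℝ) * Δx - c * ((i:ℝ) + 1) * Δt) = θ - κ * c * Δt := by rw [hθ]; ring
    have e3 : κ * (((j:ℝ) - 1) * Δx - c * (i:ℝ) * Δt) = θ - κ * Δx := by rw [hθ]; ring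
    have e4 : κ * (((j:ℝ) + 1) * Δx - c * (i:ℝ) * Δt) = θ + κ * Δx := by rw [hθ]; ring
    rw [e1, e2, e3, e4, Real.sin_add, Real.sin_sub, Real.cos_add, Real.cos_sub,
      Real.sin_sub, Real.sin_add, Real.cos_sub, Real.cos_add]
    field_simp at h ⊢
    linear_combination (α₁ * Real.sin θ + α₂ * Real.cos θ) * h
end

section
/- Let L_d be an autonomous C¹ 3-point discrete Lagrangian and Δt, Δx > 0. On the torus X = ([0,b₀]/∼) × ([0,b₁]/∼), a C¹ function u: X → ℝ^d is a stationary point of the continuous action S(u) = ∫_X L_d(u(t,x), u(t+Δt, x), u(t, x+Δx)) dx dt with respect to compactly supported variations if and only if it satisfies the functional discrete Euler–Lagrange equation: (∂₁L_d)(u(t,x), u(t+Δt,x), u(t,x+Δx)) + (∂₂L_d)(u(t−Δt,x), u(t,x), u(t−Δt,x+Δx)) + (∂₃L_d)(u(t,x−Δx), u(t+Δt,x−Δx), u(t,x)) = 0 for all (t,x). -/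
noncomputable section

/-- Continuum action for a 3-point discrete Lagrangian density on the torus:
`S(w) = ∫₀^{b₀}∫₀^{b₁} L_d(w(t,x), w(t+Δt,x), w(t,x+Δx)) dx dt`. -/
def SactD {d : ℕ} (Ld : (Fin d → ℝ) → (Fin d → ℝ) → (Fin d → ℝ) → ℝ)
    (b₀ b₁ Δt Δx : ℝ) (w : ℝ → ℝ → (Fin d → ℝ)) : ℝ :=
  ∫ t in (0:ℝ)..b₀, ∫ x in (0:ℝ)..b₁, Ld (w t x) (w (t + Δt) x) (w t (x + Δx))

/-!
Differentiating under the integral sign, the first variation of `S` at `u` in the direction `δ`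
is the integral of `DL_d` at the stencil `(u(t,x), u(t+Δt,x), u(t,x+Δx))` applied to the
stencil of `δ`. Split it into its three slots and translate the second by `t ↦ t - Δt` and the
third by `x ↦ x - Δx`; by periodicity this does not change integrals over a period cell, and
the first variation becomes `∫∫ EL(t,x) (δ(t,x))`, with `EL` the functional discrete
Euler–Lagrange expression. Hence `EL = 0` gives stationarity. Conversely, `EL` is continuous
and periodic, and testing against `δ = φ(t) ψ(x) v` with periodic bumps `φ`, `ψ` concentrated
near `(t₀, x₀)` forces `EL(t₀, x₀) v = 0` (fundamental lemma of the calculus of variations).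
-/

open MeasureTheory Set Function Real ContinuousLinearMap
open scoped ContDiff

variable {E F : Type*} [NormedAddCommGroup E] [NormedSpace ℝ E]
  [NormedAddCommGroup F] [NormedSpace ℝ F]

def cellIntegral (b₀ b₁ : ℝ) (f : ℝ → ℝ → F) : F :=
  ∫ t in (0:ℝ)..b₀, ∫ x in (0:ℝ)..b₁, f t x

section CellIntegral

variable {b₀ b₁ : ℝ} {f g : ℝ → ℝ → F}

theorem cellIntegral_eq_setIntegral (hb₀ : 0 ≤ b₀) (hb₁ : 0 ≤ b₁)
    (hf : Continuous (uncurry f)) :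
    cellIntegral b₀ b₁ f = ∫ p in Icc 0 b₀ ×ˢ Icc 0 b₁, uncurry f p := by
  have hint : IntegrableOn (uncurry f) (Icc 0 b₀ ×ˢ Icc 0 b₁) :=
    hf.continuousOn.integrableOn_compact (isCompact_Icc.prod isCompact_Icc)
  rw [Measure.volume_eq_prod, setIntegral_prod _ hint, cellIntegral,
    intervalIntegral.integral_of_le hb₀, ← integral_Icc_eq_integral_Ioc]
  refine setIntegral_congr_fun measurableSet_Icc fun t _ => ?_
  rw [intervalIntegral.integral_of_le hb₁, ← integral_Icc_eq_integral_Ioc]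
  rfl

theorem cellIntegral_add (hb₀ : 0 ≤ b₀) (hb₁ : 0 ≤ b₁)
    (hf : Continuous (uncurry f)) (hg : Continuous (uncurry g)) :
    cellIntegral b₀ b₁ (fun t x => f t x + g t x)
      = cellIntegral b₀ b₁ f + cellIntegral b₀ b₁ g := by
  have hK : IsCompact (Icc (0:ℝ) b₀ ×ˢ Icc (0:ℝ) b₁) := isCompact_Icc.prod isCompact_Icc
  rw [cellIntegral_eq_setIntegral hb₀ hb₁ hf, cellIntegral_eq_setIntegral hb₀ hb₁ hg,
    cellIntegral_eq_setIntegral hb₀ hb₁ (f := fun t x => f t x + g t x) (hf.add hg)]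
  exact integral_add (hf.continuousOn.integrableOn_compact hK)
    (hg.continuousOn.integrableOn_compact hK)

theorem cellIntegral_eq_of_periodic (hft : ∀ t x, f (t + b₀) x = f t x)
    (hfx : ∀ t x, f t (x + b₁) = f t x) (a₀ a₁ : ℝ) :
    cellIntegral b₀ b₁ f = ∫ t in a₀..a₀ + b₀, ∫ x in a₁..a₁ + b₁, f t x := by
  have hinner : ∀ t, ∫ x in (0:ℝ)..b₁, f t x = ∫ x in a₁..a₁ + b₁, f t x := fun t => by
    simpa using Periodic.intervalIntegral_add_eq (f := f t) (hfx t) 0 a₁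
  have hper : Periodic (fun t => ∫ x in (0:ℝ)..b₁, f t x) b₀ := fun t => by
    simp only [hft]
  simpa [cellIntegral, hinner] using hper.intervalIntegral_add_eq 0 a₀

theorem cellIntegral_comp_add_left (hft : ∀ t x, f (t + b₀) x = f t x) (c : ℝ) :
    cellIntegral b₀ b₁ (fun t x => f (t + c) x) = cellIntegral b₀ b₁ f := by
  have hper : Periodic (fun t => ∫ x in (0:ℝ)..b₁, f t x) b₀ := fun t => by
    simp only [hft]
  have := hper.intervalIntegral_add_eq c 0
  rw [zero_add, add_comm c] at this
  simpa only [cellIntegral, zero_add,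
    intervalIntegral.integral_comp_add_right (fun t => ∫ x in (0:ℝ)..b₁, f t x)] using this

theorem cellIntegral_comp_add_right (hfx : ∀ t x, f t (x + b₁) = f t x) (c : ℝ) :
    cellIntegral b₀ b₁ (fun t x => f t (x + c)) = cellIntegral b₀ b₁ f := by
  refine intervalIntegral.integral_congr fun t _ => ?_
  have := Periodic.intervalIntegral_add_eq (f := f t) (hfx t) c 0
  rw [zero_add, add_comm c] at this
  simpa only [intervalIntegral.integral_comp_add_right (f t), zero_add] using this

end CellIntegral

theorem hasDerivAt_setIntegral_comp_add_smul {X : Type*} [TopologicalSpace X] [T2Space X]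
    [MeasurableSpace X] [OpensMeasurableSpace X] {μ : Measure X} [IsFiniteMeasureOnCompacts μ]
    {K : Set X} (hK : IsCompact K) {L : E → F} (hL : ContDiff ℝ 1 L) {P Q : X → E}
    (hP : Continuous P) (hQ : Continuous Q) :
    HasDerivAt (fun ε : ℝ => ∫ p in K, L (P p + ε • Q p) ∂μ)
      (∫ p in K, fderiv ℝ L (P p) (Q p) ∂μ) 0 := by
  have hDL : Continuous (fderiv ℝ L) := hL.continuous_fderiv one_ne_zero
  have hF : ∀ ε : ℝ, Continuous fun p => L (P p + ε • Q p) := fun ε => by fun_prop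
  have hF' : Continuous fun z : X × ℝ => fderiv ℝ L (P z.1 + z.2 • Q z.1) (Q z.1) := by
    fun_prop
  obtain ⟨C, hC⟩ := (hK.prod (isCompact_closedBall (0:ℝ) 1)).exists_bound_of_continuousOn
    hF'.continuousOn
  have hbound : ∀ᵐ p ∂μ.restrict K, ∀ ε ∈ Metric.ball (0:ℝ) 1,
      ‖fderiv ℝ L (P p + ε • Q p) (Q p)‖ ≤ C :=
    (ae_restrict_mem hK.measurableSet).mono fun p hp ε hε =>
      hC (p, ε) ⟨hp, Metric.ball_subset_closedBall hε⟩
  have hderiv : ∀ p ε, HasDerivAt (fun ε : ℝ => L (P p + ε • Q p))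
      (fderiv ℝ L (P p + ε • Q p) (Q p)) ε := fun p ε => by
    have hline : HasDerivAt (fun ε : ℝ => P p + ε • Q p) (Q p) ε := by
      simpa using ((hasDerivAt_id ε).smul_const (Q p)).const_add (P p)
    exact ((hL.differentiable one_ne_zero _).hasFDerivAt).comp_hasDerivAt ε hline
  have key := hasDerivAt_integral_of_dominated_loc_of_deriv_le (Metric.ball_mem_nhds 0 one_pos)
    (.of_forall fun ε => (hF ε).continuousOn.aestronglyMeasurable_of_isCompact hK
      hK.measurableSet)
    ((hF 0).continuousOn.integrableOn_compact hK)
    ((hF'.comp (Continuous.prodMk_left 0)).continuousOn.aestronglyMeasurable_of_isCompact hK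
      hK.measurableSet)
    hbound (integrableOn_const hK.measure_ne_top) (.of_forall fun p ε _ => hderiv p ε)
  simpa using key.2

def uncurry₃ (Ld : E → E → E → F) (q : E × E × E) : F := Ld q.1 q.2.1 q.2.2

section Partials

variable {Ld : E → E → E → F} {x y z : E}

theorem fderiv_apply_eq_fderiv_uncurry₃_fst
    (hL : DifferentiableAt ℝ (uncurry₃ Ld) (x, y, z)) (v : E) :
    fderiv ℝ (fun a => Ld a y z) x v = fderiv ℝ (uncurry₃ Ld) (x, y, z) (v, 0, 0) := by
  have h := hL.hasFDerivAt.comp x (hasFDerivAt_prodMk_left (𝕜 := ℝ) x (y, z))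
  exact DFunLike.congr_fun h.fderiv v

theorem fderiv_apply_eq_fderiv_uncurry₃_snd
    (hL : DifferentiableAt ℝ (uncurry₃ Ld) (x, y, z)) (v : E) :
    fderiv ℝ (fun a => Ld x a z) y v = fderiv ℝ (uncurry₃ Ld) (x, y, z) (0, v, 0) := by
  have h := hL.hasFDerivAt.comp y ((hasFDerivAt_prodMk_right (𝕜 := ℝ) x (y, z)).comp y
      (hasFDerivAt_prodMk_left (𝕜 := ℝ) y z))
  exact DFunLike.congr_fun h.fderiv v

theorem fderiv_apply_eq_fderiv_uncurry₃_thd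
    (hL : DifferentiableAt ℝ (uncurry₃ Ld) (x, y, z)) (v : E) :
    fderiv ℝ (fun a => Ld x y a) z v = fderiv ℝ (uncurry₃ Ld) (x, y, z) (0, 0, v) := by
  have h := hL.hasFDerivAt.comp z ((hasFDerivAt_prodMk_right (𝕜 := ℝ) x (y, z)).comp z
      (hasFDerivAt_prodMk_right (𝕜 := ℝ) y z))
  exact DFunLike.congr_fun h.fderiv v

end Partials

def stencil {α : Type*} (Δt Δx : ℝ) (w : ℝ → ℝ → α) (t x : ℝ) : α × α × α :=
  (w t x, w (t + Δt) x, w t (x + Δx))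

section Stencil

variable {α : Type*} {Δt Δx b₀ b₁ : ℝ} {w : ℝ → ℝ → α}

@[fun_prop]
theorem Continuous.stencil {X : Type*} [TopologicalSpace X] [TopologicalSpace α]
    (hw : Continuous (uncurry w)) {f g : X → ℝ} (hf : Continuous f) (hg : Continuous g) :
    Continuous fun z => stencil Δt Δx w (f z) (g z) := by
  unfold _root_.stencil
  fun_prop

theorem stencil_add_period_left (hw : ∀ t x, w (t + b₀) x = w t x) (t x : ℝ) :
    stencil Δt Δx w (t + b₀) x = stencil Δt Δx w t x := by
  simp only [stencil, add_right_comm _ b₀, hw]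

theorem stencil_add_period_right (hw : ∀ t x, w t (x + b₁) = w t x) (t x : ℝ) :
    stencil Δt Δx w t (x + b₁) = stencil Δt Δx w t x := by
  simp only [stencil, add_right_comm _ b₁, hw]

end Stencil

theorem SactD_eq_cellIntegral {d : ℕ} (Ld : (Fin d → ℝ) → (Fin d → ℝ) → (Fin d → ℝ) → ℝ)
    (b₀ b₁ Δt Δx : ℝ) (w : ℝ → ℝ → (Fin d → ℝ)) :
    SactD Ld b₀ b₁ Δt Δx w = cellIntegral b₀ b₁ fun t x => uncurry₃ Ld (stencil Δt Δx w t x) :=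
  rfl

def discreteEulerLagrange (Ld : E → E → E → F) (Δt Δx : ℝ) (u : ℝ → ℝ → E) (t x : ℝ) :
    E →L[ℝ] F :=
  fderiv ℝ (fun a => Ld a (u (t + Δt) x) (u t (x + Δx))) (u t x)
    + fderiv ℝ (fun a => Ld (u (t - Δt) x) a (u (t - Δt) (x + Δx))) (u t x)
    + fderiv ℝ (fun a => Ld (u t (x - Δx)) (u (t + Δt) (x - Δx)) a) (u t x)

section DiscreteEulerLagrange

variable {Ld : E → E → E → F} {Δt Δx b₀ b₁ : ℝ} {u : ℝ → ℝ → E}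

theorem discreteEulerLagrange_apply (hL : Differentiable ℝ (uncurry₃ Ld)) (t x : ℝ) (v : E) :
    discreteEulerLagrange Ld Δt Δx u t x v =
      fderiv ℝ (uncurry₃ Ld) (stencil Δt Δx u t x) (v, 0, 0)
        + fderiv ℝ (uncurry₃ Ld) (stencil Δt Δx u (t - Δt) x) (0, v, 0)
        + fderiv ℝ (uncurry₃ Ld) (stencil Δt Δx u t (x - Δx)) (0, 0, v) := by
  simp only [discreteEulerLagrange, add_apply, fderiv_apply_eq_fderiv_uncurry₃_fst (hL _),
    fderiv_apply_eq_fderiv_uncurry₃_snd (hL _), fderiv_apply_eq_fderiv_uncurry₃_thd (hL _),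
    stencil, sub_add_cancel]

theorem continuous_discreteEulerLagrange_apply (hL : ContDiff ℝ 1 (uncurry₃ Ld))
    (hu : Continuous (uncurry u)) (v : E) :
    Continuous fun p : ℝ × ℝ => discreteEulerLagrange Ld Δt Δx u p.1 p.2 v := by
  have hD := hL.continuous_fderiv one_ne_zero
  simp only [discreteEulerLagrange_apply (hL.differentiable one_ne_zero)]
  fun_prop

theorem discreteEulerLagrange_add_period_left (hu : ∀ t x, u (t + b₀) x = u t x) (t x : ℝ) :
    discreteEulerLagrange Ld Δt Δx u (t + b₀) x = discreteEulerLagrange Ld Δt Δx u t x := by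
  simp only [discreteEulerLagrange, add_right_comm _ b₀, add_sub_right_comm _ b₀, hu]

theorem discreteEulerLagrange_add_period_right (hu : ∀ t x, u t (x + b₁) = u t x) (t x : ℝ) :
    discreteEulerLagrange Ld Δt Δx u t (x + b₁) = discreteEulerLagrange Ld Δt Δx u t x := by
  simp only [discreteEulerLagrange, add_right_comm _ b₁, add_sub_right_comm _ b₁, hu]

end DiscreteEulerLagrange

theorem cellIntegral_fderiv_stencil_eq {Ld : E → E → E → F}
    {Δt Δx b₀ b₁ : ℝ} {u δ : ℝ → ℝ → E} (hb₀ : 0 ≤ b₀) (hb₁ : 0 ≤ b₁)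
    (hL : ContDiff ℝ 1 (uncurry₃ Ld)) (hu : Continuous (uncurry u))
    (hut : ∀ t x, u (t + b₀) x = u t x) (hux : ∀ t x, u t (x + b₁) = u t x)
    (hδ : Continuous (uncurry δ))
    (hδt : ∀ t x, δ (t + b₀) x = δ t x) (hδx : ∀ t x, δ t (x + b₁) = δ t x) :
    cellIntegral b₀ b₁ (fun t x => fderiv ℝ (uncurry₃ Ld) (stencil Δt Δx u t x)
        (stencil Δt Δx δ t x))
      = cellIntegral b₀ b₁ (fun t x => discreteEulerLagrange Ld Δt Δx u t x (δ t x)) := by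
  set D := fderiv ℝ (uncurry₃ Ld)
  have hD : Continuous D := hL.continuous_fderiv one_ne_zero
  have hsplit : ∀ t x, D (stencil Δt Δx u t x) (stencil Δt Δx δ t x)
      = D (stencil Δt Δx u t x) (δ t x, 0, 0) + D (stencil Δt Δx u t x) (0, δ (t + Δt) x, 0)
        + D (stencil Δt Δx u t x) (0, 0, δ t (x + Δx)) := fun t x => by
    simp only [← map_add, Prod.mk_add_mk, add_zero, zero_add, stencil]
  have hshift₁ : cellIntegral b₀ b₁ (fun t x => D (stencil Δt Δx u t x) (0, δ (t + Δt) x, 0))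
      = cellIntegral b₀ b₁ (fun t x => D (stencil Δt Δx u (t - Δt) x) (0, δ t x, 0)) := by
    simpa only [add_sub_cancel_right] using cellIntegral_comp_add_left
      (f := fun t x => D (stencil Δt Δx u (t - Δt) x) (0, δ t x, 0))
      (fun t x => by simp only [add_sub_right_comm _ b₀, stencil_add_period_left hut, hδt]) Δt
  have hshift₂ : cellIntegral b₀ b₁ (fun t x => D (stencil Δt Δx u t x) (0, 0, δ t (x + Δx)))
      = cellIntegral b₀ b₁ (fun t x => D (stencil Δt Δx u t (x - Δx)) (0, 0, δ t x)) := by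
    simpa only [add_sub_cancel_right] using cellIntegral_comp_add_right
      (f := fun t x => D (stencil Δt Δx u t (x - Δx)) (0, 0, δ t x))
      (fun t x => by simp only [add_sub_right_comm _ b₁, stencil_add_period_right hux, hδx]) Δx
  simp only [hsplit, discreteEulerLagrange_apply (hL.differentiable one_ne_zero)]
  rw [cellIntegral_add hb₀ hb₁ (by fun_prop) (by fun_prop),
    cellIntegral_add hb₀ hb₁ (by fun_prop) (by fun_prop), hshift₁, hshift₂,
    cellIntegral_add hb₀ hb₁ (by fun_prop) (by fun_prop),
    cellIntegral_add hb₀ hb₁ (by fun_prop) (by fun_prop)]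

theorem hasDerivAt_SactD {d : ℕ} {Ld : (Fin d → ℝ) → (Fin d → ℝ) → (Fin d → ℝ) → ℝ}
    {b₀ b₁ Δt Δx : ℝ} {u δ : ℝ → ℝ → (Fin d → ℝ)} (hb₀ : 0 ≤ b₀) (hb₁ : 0 ≤ b₁)
    (hL : ContDiff ℝ 1 (uncurry₃ Ld)) (hu : Continuous (uncurry u))
    (hδ : Continuous (uncurry δ)) :
    HasDerivAt (fun ε : ℝ => SactD Ld b₀ b₁ Δt Δx (fun t x => u t x + ε • δ t x))
      (cellIntegral b₀ b₁ fun t x =>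
        fderiv ℝ (uncurry₃ Ld) (stencil Δt Δx u t x) (stencil Δt Δx δ t x)) 0 := by
  have hS : Continuous (uncurry (stencil Δt Δx u)) := by fun_prop
  have hT : Continuous (uncurry (stencil Δt Δx δ)) := by fun_prop
  have hD := hL.continuous_fderiv one_ne_zero
  have key := hasDerivAt_setIntegral_comp_add_smul (μ := volume)
    (isCompact_Icc.prod isCompact_Icc : IsCompact (Icc 0 b₀ ×ˢ Icc 0 b₁)) hL hS hT
  have hSact : ∀ ε : ℝ, SactD Ld b₀ b₁ Δt Δx (fun t x => u t x + ε • δ t x)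
      = ∫ p in Icc 0 b₀ ×ˢ Icc 0 b₁, uncurry₃ Ld
          (uncurry (stencil Δt Δx u) p + ε • uncurry (stencil Δt Δx δ) p) := fun ε => by
    rw [SactD_eq_cellIntegral]
    exact cellIntegral_eq_setIntegral hb₀ hb₁ (hL.continuous.comp (hS.add (hT.const_smul ε)))
  rw [cellIntegral_eq_setIntegral hb₀ hb₁ (by fun_prop), funext hSact]
  exact key

theorem exists_periodic_bump {b ρ : ℝ} (hb : 0 < b) (hρ : 0 < ρ) (hρb : ρ ≤ b / 2) (c : ℝ) :
    ∃ φ : ℝ → ℝ, ContDiff ℝ ∞ φ ∧ Periodic φ b ∧ (∀ t, 0 ≤ φ t) ∧ 0 < φ c ∧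
      ∀ t, |t - c| ≤ b / 2 → φ t ≠ 0 → |t - c| < ρ := by
  set θ : ℝ → ℝ := fun t => 2 * π * (t - c) / b
  have habsθ : ∀ t, |θ t| = 2 * π * |t - c| / b := fun t => by
    rw [abs_div, abs_mul, abs_of_pos two_pi_pos, abs_of_pos hb]
  have hθρ : 0 < θ (c + ρ) := by simp only [θ, add_sub_cancel_left]; positivity
  have hθρπ : θ (c + ρ) ≤ π := by
    simp only [θ, add_sub_cancel_left]
    rw [div_le_iff₀ hb]
    nlinarith [pi_pos]
  refine ⟨fun t => expNegInvGlue (cos (θ t) - cos (θ (c + ρ))), ?_, fun t => ?_,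
    fun t => expNegInvGlue.nonneg _, ?_, fun t ht hne => ?_⟩
  · exact expNegInvGlue.contDiff.comp (by fun_prop)
  · have : θ (t + b) = θ t + 2 * π := by simp only [θ]; field_simp; ring
    simp only [this, cos_add_two_pi]
  · refine expNegInvGlue.pos_of_pos (sub_pos.2 ?_)
    simpa [θ] using cos_lt_cos_of_nonneg_of_le_pi le_rfl hθρπ hθρ
  · by_contra! hρt
    refine hne (expNegInvGlue.zero_of_nonpos (sub_nonpos.2 ?_))
    rw [← cos_abs (θ t)]
    refine cos_le_cos_of_nonneg_of_le_pi hθρ.le ?_ ?_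
    · rw [habsθ, div_le_iff₀ hb]
      nlinarith [pi_pos]
    · rw [habsθ]
      simp only [θ, add_sub_cancel_left]
      gcongr

theorem intervalIntegral_intervalIntegral_pos {f : ℝ → ℝ → ℝ} {a₀ c₀ a₁ c₁ : ℝ}
    (h₀ : a₀ < c₀) (h₁ : a₁ < c₁) (hf : Continuous (uncurry f))
    (hnonneg : ∀ t ∈ Icc a₀ c₀, ∀ x ∈ Icc a₁ c₁, 0 ≤ f t x)
    {t₀ x₀ : ℝ} (ht₀ : t₀ ∈ Icc a₀ c₀) (hx₀ : x₀ ∈ Icc a₁ c₁) (hpos : 0 < f t₀ x₀) :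
    0 < ∫ t in a₀..c₀, ∫ x in a₁..c₁, f t x := by
  have hcont : ∀ t, Continuous (f t) := fun t => hf.comp (Continuous.prodMk_right t)
  refine intervalIntegral.integral_pos h₀
    (intervalIntegral.continuous_parametric_intervalIntegral_of_continuous' hf a₁ c₁).continuousOn
    (fun t ht => intervalIntegral.integral_nonneg h₁.le (hnonneg t (Ioc_subset_Icc_self ht)))
    ⟨t₀, ht₀, intervalIntegral.integral_pos h₁ (hcont t₀).continuousOn
      (fun x hx => hnonneg t₀ ht₀ x (Ioc_subset_Icc_self hx)) ⟨x₀, hx₀, hpos⟩⟩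

theorem exists_cellIntegral_apply_pos {b₀ b₁ : ℝ} (hb₀ : 0 < b₀) (hb₁ : 0 < b₁)
    {W : ℝ → ℝ → E →L[ℝ] ℝ} (hW : ∀ v, Continuous fun p : ℝ × ℝ => W p.1 p.2 v)
    (hWt : ∀ t x, W (t + b₀) x = W t x) (hWx : ∀ t x, W t (x + b₁) = W t x)
    {t₀ x₀ : ℝ} {v : E} (hv : 0 < W t₀ x₀ v) :
    ∃ δ : ℝ → ℝ → E, ContDiff ℝ 1 (uncurry δ) ∧ (∀ t x, δ (t + b₀) x = δ t x) ∧
      (∀ t x, δ t (x + b₁) = δ t x) ∧ 0 < cellIntegral b₀ b₁ (fun t x => W t x (δ t x)) := by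
  obtain ⟨r, hr, hball⟩ := Metric.isOpen_iff.mp (isOpen_lt continuous_const (hW v)) (t₀, x₀) hv
  set ρ := min r (min (b₀ / 2) (b₁ / 2))
  have hρ : 0 < ρ := by positivity
  have hnear : ∀ t x, |t - t₀| < ρ → |x - x₀| < ρ → 0 < W t x v := fun t x ht hx =>
    hball (show (t, x) ∈ Metric.ball (t₀, x₀) r by
      simp only [Metric.mem_ball, Prod.dist_eq, Real.dist_eq, max_lt_iff]
      exact ⟨ht.trans_le (min_le_left _ _), hx.trans_le (min_le_left _ _)⟩)
  obtain ⟨φ, hφ, hφper, hφ0, hφpos, hφsupp⟩ :=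
    exists_periodic_bump hb₀ hρ ((min_le_right _ _).trans (min_le_left _ _)) t₀
  obtain ⟨ψ, hψ, hψper, hψ0, hψpos, hψsupp⟩ :=
    exists_periodic_bump hb₁ hρ ((min_le_right _ _).trans (min_le_right _ _)) x₀
  refine ⟨fun t x => (φ t * ψ x) • v,
    (((hφ.comp contDiff_fst).mul (hψ.comp contDiff_snd)).smul contDiff_const).of_le (by simp),
    fun t x => by simp only [hφper t], fun t x => by simp only [hψper x], ?_⟩
  simp only [map_smul, smul_eq_mul]
  -- On the period cell centred at `(t₀, x₀)` the bumps vanish outside the `ρ`-box.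
  rw [cellIntegral_eq_of_periodic (fun t x => by rw [hφper, hWt]) (fun t x => by rw [hψper, hWx])
    (t₀ - b₀ / 2) (x₀ - b₁ / 2)]
  refine intervalIntegral_intervalIntegral_pos (by linarith) (by linarith) (by fun_prop)
    (fun t ht x hx => ?_) (t₀ := t₀) (x₀ := x₀) ⟨by linarith, by linarith⟩
    ⟨by linarith, by linarith⟩ (by simpa using mul_pos (mul_pos hφpos hψpos) hv)
  have ht' : |t - t₀| ≤ b₀ / 2 := abs_sub_le_iff.2 ⟨by linarith [ht.2], by linarith [ht.1]⟩
  have hx' : |x - x₀| ≤ b₁ / 2 := abs_sub_le_iff.2 ⟨by linarith [hx.2], by linarith [hx.1]⟩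
  rcases (hφ0 t).eq_or_lt with hφt | hφt
  · simp [← hφt]
  rcases (hψ0 x).eq_or_lt with hψx | hψx
  · simp [← hψx]
  exact (mul_pos (mul_pos hφt hψx) (hnear t x (hφsupp t ht' hφt.ne') (hψsupp x hx' hψx.ne'))).le

theorem eq_zero_of_forall_cellIntegral_apply_eq_zero {b₀ b₁ : ℝ} (hb₀ : 0 < b₀) (hb₁ : 0 < b₁)
    {W : ℝ → ℝ → E →L[ℝ] ℝ} (hW : ∀ v, Continuous fun p : ℝ × ℝ => W p.1 p.2 v)
    (hWt : ∀ t x, W (t + b₀) x = W t x) (hWx : ∀ t x, W t (x + b₁) = W t x)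
    (h : ∀ δ : ℝ → ℝ → E, ContDiff ℝ 1 (uncurry δ) → (∀ t x, δ (t + b₀) x = δ t x) →
      (∀ t x, δ t (x + b₁) = δ t x) → cellIntegral b₀ b₁ (fun t x => W t x (δ t x)) = 0)
    (t₀ x₀ : ℝ) : W t₀ x₀ = 0 := by
  suffices key : ∀ v, W t₀ x₀ v ≤ 0 by
    ext v
    exact le_antisymm (key v) (by simpa using key (-v))
  intro v
  by_contra! hv
  obtain ⟨δ, hδ, hδt, hδx, hpos⟩ := exists_cellIntegral_apply_pos hb₀ hb₁ hW hWt hWx hv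
  exact hpos.ne' (h δ hδ hδt hδx)

theorem functional_discrete_EL_general
    {d : ℕ} (b₀ b₁ Δt Δx : ℝ) (hb₀ : 0 < b₀) (hb₁ : 0 < b₁)
    (Ld : (Fin d → ℝ) → (Fin d → ℝ) → (Fin d → ℝ) → ℝ)
    (hLd : ContDiff ℝ 1
      (fun q : (Fin d → ℝ) × (Fin d → ℝ) × (Fin d → ℝ) => Ld q.1 q.2.1 q.2.2))
    (u : ℝ → ℝ → (Fin d → ℝ))
    (hu : ContDiff ℝ 1 (fun p : ℝ × ℝ => u p.1 p.2))
    (huper_t : ∀ t x, u (t + b₀) x = u t x)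
    (huper_x : ∀ t x, u t (x + b₁) = u t x) :
    (∀ δ : ℝ → ℝ → (Fin d → ℝ),
      ContDiff ℝ 1 (fun p : ℝ × ℝ => δ p.1 p.2) →
      (∀ t x, δ (t + b₀) x = δ t x) →
      (∀ t x, δ t (x + b₁) = δ t x) →
      deriv (fun ε : ℝ =>
        SactD Ld b₀ b₁ Δt Δx (fun t x => u t x + ε • δ t x)) 0 = 0)
    ↔
    (∀ t x : ℝ,
      fderiv ℝ (fun a => Ld a (u (t + Δt) x) (u t (x + Δx))) (u t x)
        + fderiv ℝ (fun a => Ld (u (t - Δt) x) a (u (t - Δt) (x + Δx))) (u t x)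
        + fderiv ℝ (fun a => Ld (u t (x - Δx)) (u (t + Δt) (x - Δx)) a) (u t x)
        = 0) := by
  have hfirst : ∀ δ : ℝ → ℝ → (Fin d → ℝ), ContDiff ℝ 1 (uncurry δ) →
      (∀ t x, δ (t + b₀) x = δ t x) → (∀ t x, δ t (x + b₁) = δ t x) →
      deriv (fun ε : ℝ => SactD Ld b₀ b₁ Δt Δx (fun t x => u t x + ε • δ t x)) 0
        = cellIntegral b₀ b₁ (fun t x => discreteEulerLagrange Ld Δt Δx u t x (δ t x)) :=
    fun δ hδ hδt hδx => by
      rw [(hasDerivAt_SactD hb₀.le hb₁.le hLd hu.continuous hδ.continuous).deriv,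
        cellIntegral_fderiv_stencil_eq hb₀.le hb₁.le hLd hu.continuous huper_t huper_x
          hδ.continuous hδt hδx]
  change _ ↔ ∀ t x, discreteEulerLagrange Ld Δt Δx u t x = 0
  constructor
  · intro hstat
    exact eq_zero_of_forall_cellIntegral_apply_eq_zero hb₀ hb₁
      (continuous_discreteEulerLagrange_apply hLd hu.continuous)
      (discreteEulerLagrange_add_period_left huper_t)
      (discreteEulerLagrange_add_period_right huper_x)
      fun δ hδ hδt hδx => (hfirst δ hδ hδt hδx).symm.trans (hstat δ hδ hδt hδx)
  · intro hEL δ hδ hδt hδx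
    simp [hfirst δ hδ hδt hδx, hEL, cellIntegral]

/-- A C¹ field on the torus is a stationary point of the continuum action of an
autonomous C¹ 3-point discrete Lagrangian with respect to (periodic C¹) variations
iff it satisfies the functional discrete Euler–Lagrange equation
`∂₁L_d(u(t,x), u(t+Δt,x), u(t,x+Δx)) + ∂₂L_d(u(t−Δt,x), u(t,x), u(t−Δt,x+Δx))
  + ∂₃L_d(u(t,x−Δx), u(t+Δt,x−Δx), u(t,x)) = 0` for all `(t,x)`. -/
theorem functional_discrete_EL
    {d : ℕ} (b₀ b₁ Δt Δx : ℝ) (hb₀ : 0 < b₀) (hb₁ : 0 < b₁)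
    (hΔt : 0 < Δt) (hΔx : 0 < Δx)
    (Ld : (Fin d → ℝ) → (Fin d → ℝ) → (Fin d → ℝ) → ℝ)
    (hLd : ContDiff ℝ 1
      (fun q : (Fin d → ℝ) × (Fin d → ℝ) × (Fin d → ℝ) => Ld q.1 q.2.1 q.2.2))
    (u : ℝ → ℝ → (Fin d → ℝ))
    (hu : ContDiff ℝ 1 (fun p : ℝ × ℝ => u p.1 p.2))
    (huper_t : ∀ t x, u (t + b₀) x = u t x)
    (huper_x : ∀ t x, u t (x + b₁) = u t x) :
    (∀ δ : ℝ → ℝ → (Fin d → ℝ),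
      ContDiff ℝ 1 (fun p : ℝ × ℝ => δ p.1 p.2) →
      (∀ t x, δ (t + b₀) x = δ t x) →
      (∀ t x, δ t (x + b₁) = δ t x) →
      deriv (fun ε : ℝ =>
        SactD Ld b₀ b₁ Δt Δx (fun t x => u t x + ε • δ t x)) 0 = 0)
    ↔
    (∀ t x : ℝ,
      fderiv ℝ (fun a => Ld a (u (t + Δt) x) (u t (x + Δx))) (u t x)
        + fderiv ℝ (fun a => Ld (u (t - Δt) x) a (u (t - Δt) (x + Δx))) (u t x)
        + fderiv ℝ (fun a => Ld (u t (x - Δx)) (u (t + Δt) (x - Δx)) a) (u t x)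
        = 0) :=
  functional_discrete_EL_general b₀ b₁ Δt Δx hb₀ hb₁ Ld hLd u hu huper_t huper_x
end
end
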